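/- Functional observability is strictly stronger than the 'target observability' condition rank(𝒪 Fᵀ) = r: if rank[𝒪; F] = rank(𝒪) and rank(F) = r, then rank(𝒪 Fᵀ) = r; but the converse fails, as witnessed by the 4-dimensional system A with nonzero entries a₃₁, a₃₂, a₄₃ only, C = e₄ᵀ, F = e₂ᵀ, which satisfies rank(𝒪Fᵀ) = 1 yet rank[𝒪; F] = 4 > 3 = rank(𝒪). -/

import Mathlib

open Matrix

/-- The observability matrix `[C; CA; ...; CA^{n-1}]`. -/
def obsMat {n q : ℕ} (A : Matrix (Fin n) (Fin n) ℝ)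
    (C : Matrix (Fin q) (Fin n) ℝ) : Matrix (Fin n × Fin q) (Fin n) ℝ :=
  fun p k => (C * A ^ (p.1 : ℕ)) p.2 k

/-!
If `rank [𝒪; F] = rank 𝒪`, the rows of `F` lie in the row space of `𝒪`. Over `ℝ`, `𝒪` is
injective on its own row space, because `𝒪 𝒪ᵀ x = 0` forces `𝒪ᵀ x = 0`; hence `𝒪 Fᵀ` has the
same kernel as `Fᵀ`, and `rank (𝒪 Fᵀ) = rank F = r`.

In the counterexample the rows of `𝒪` are `e₄, a₄₃ e₃, a₄₃ (a₃₁ e₁ + a₃₂ e₂), 0`. The third row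
gives `𝒪 e₂ᵀ ≠ 0`, while `e₂` is not in the row space: the `e₁`-component cannot be cancelled.
-/

open Module Submodule LinearMap

namespace Matrix

variable {m m' n R : Type*}

section Field

variable [Field R]

theorem rank_fromRows [Finite m] [Finite m'] [Fintype n] (A : Matrix m n R)
    (B : Matrix m' n R) :
    (fromRows A B).rank = finrank R ↥(span R (Set.range A.row) ⊔ span R (Set.range B.row)) := by
  rw [rank_eq_finrank_span_row, ← span_union, ← Set.Sum.elim_range]
  rfl

theorem rank_fromRows_le [Finite m] [Finite m'] [Fintype n] (A : Matrix m n R)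
    (B : Matrix m' n R) :
    (fromRows A B).rank ≤ A.rank + B.rank := by
  rw [rank_fromRows, rank_eq_finrank_span_row A, rank_eq_finrank_span_row B]
  exact finrank_add_le_finrank_add_finrank _ _

theorem span_row_le_of_rank_fromRows_eq [Finite m] [Finite m'] [Fintype n]
    {A : Matrix m n R} {B : Matrix m' n R} (h : (fromRows A B).rank = A.rank) :
    span R (Set.range B.row) ≤ span R (Set.range A.row) := by
  rw [rank_fromRows, rank_eq_finrank_span_row A] at h
  rw [eq_of_le_of_finrank_le le_sup_left h.le]
  exact le_sup_right

variable [Fintype n]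

theorem rank_eq_card_width_of_injective {A : Matrix m n R}
    (h : Function.Injective A.mulVecLin) : A.rank = Fintype.card n := by
  rw [rank, finrank_range_of_inj h, finrank_fintype_fun_eq_card]

theorem rank_lt_card_width_of_mulVec_eq_zero {A : Matrix m n R} {v : n → R}
    (hv : v ≠ 0) (hAv : A *ᵥ v = 0) : A.rank < Fintype.card n := by
  have hker : ker A.mulVecLin ≠ ⊥ := (Submodule.ne_bot_iff _).2 ⟨v, hAv, hv⟩
  have hnullity := A.mulVecLin.finrank_range_add_finrank_ker
  rw [finrank_fintype_fun_eq_card] at hnullity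
  have hpos := Submodule.finrank_eq_zero.not.2 hker
  rw [rank]
  omega

theorem rank_eq_rank_of_ker_mulVecLin_eq {A : Matrix m n R} {B : Matrix m' n R}
    (h : ker A.mulVecLin = ker B.mulVecLin) : A.rank = B.rank := by
  have hA := A.mulVecLin.finrank_range_add_finrank_ker
  have hB := B.mulVecLin.finrank_range_add_finrank_ker
  rw [h] at hA
  rw [rank, rank]
  omega

end Field

section LinearOrderedField

variable [Field R] [LinearOrder R] [IsStrictOrderedRing R] [Fintype m] [Fintype n]

theorem disjoint_ker_mulVecLin_range_transpose (A : Matrix m n R) :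
    Disjoint (ker A.mulVecLin) (range Aᵀ.mulVecLin) := by
  rw [disjoint_iff_inf_le]
  rintro _ ⟨hker, x, rfl⟩
  have hx : x ∈ ker (Aᵀᵀ * Aᵀ).mulVecLin := by
    rwa [transpose_transpose, mem_ker, mulVecLin_mul, LinearMap.comp_apply]
  rwa [ker_mulVecLin_transpose_mul_self] at hx

theorem rank_mul_transpose_of_span_row_le [Fintype m'] {A : Matrix m n R} {B : Matrix m' n R}
    (h : span R (Set.range B.row) ≤ span R (Set.range A.row)) : (A * Bᵀ).rank = B.rank := by
  have hrange : range Bᵀ.mulVecLin ≤ range Aᵀ.mulVecLin := by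
    rwa [range_mulVecLin, range_mulVecLin]
  rw [← rank_transpose B]
  refine rank_eq_rank_of_ker_mulVecLin_eq (le_antisymm (fun x hx => ?_) fun x hx => ?_)
  · rw [mem_ker, mulVecLin_mul, LinearMap.comp_apply] at hx
    exact disjoint_def.1 (disjoint_ker_mulVecLin_range_transpose A) _ hx (hrange ⟨x, rfl⟩)
  · rw [mem_ker, mulVecLin_mul, LinearMap.comp_apply, mem_ker.1 hx, map_zero]

end LinearOrderedField

end Matrix

section Counterexample

variable (a₃₁ a₃₂ a₄₃ : ℝ)

def counterexampleObsMat : Matrix (Fin 4 × Fin 1) (Fin 4) ℝ :=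
  of fun p => ![![0, 0, 0, 1], ![0, 0, a₄₃, 0], ![a₄₃ * a₃₁, a₄₃ * a₃₂, 0, 0], 0] p.1

theorem obsMat_counterexample :
    obsMat !![0, 0, 0, 0; 0, 0, 0, 0; a₃₁, a₃₂, 0, 0; 0, 0, a₄₃, 0] !![0, 0, 0, 1] =
      counterexampleObsMat a₃₁ a₃₂ a₄₃ := by
  ext ⟨i, j⟩ k
  fin_cases i <;> fin_cases j <;> fin_cases k <;>
    simp [obsMat, counterexampleObsMat, pow_succ, mul_apply, Fin.sum_univ_four]

theorem counterexampleObsMat_mulVec (x : Fin 4 → ℝ) :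
    counterexampleObsMat a₃₁ a₃₂ a₄₃ *ᵥ x =
      fun p => ![x 3, a₄₃ * x 2, a₄₃ * a₃₁ * x 0 + a₄₃ * a₃₂ * x 1, 0] p.1 := by
  ext ⟨i, j⟩
  fin_cases i <;> simp [counterexampleObsMat, mulVec, dotProduct, Fin.sum_univ_four]

variable {a₃₁ a₃₂ a₄₃}

theorem rank_counterexampleObsMat_mul_transpose (h₃₂ : a₃₂ ≠ 0) (h₄₃ : a₄₃ ≠ 0) :
    (counterexampleObsMat a₃₁ a₃₂ a₄₃ * (!![0, 1, 0, 0] : Matrix (Fin 1) (Fin 4) ℝ)ᵀ).rank =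
      1 := by
  refine rank_eq_card_width_of_injective ((injective_iff_map_eq_zero _).2 fun y hy => ?_)
  have hy₂ : a₄₃ * a₃₂ * y 0 = 0 := by
    simpa [counterexampleObsMat_mulVec, vecHead] using congr_fun hy (2, 0)
  ext i
  fin_cases i
  simpa [h₃₂, h₄₃] using hy₂

theorem rank_fromRows_counterexampleObsMat (h₃₁ : a₃₁ ≠ 0) (h₄₃ : a₄₃ ≠ 0) :
    (fromRows (counterexampleObsMat a₃₁ a₃₂ a₄₃) !![0, 1, 0, 0]).rank = 4 := by
  refine rank_eq_card_width_of_injective ((injective_iff_map_eq_zero _).2 fun x hx => ?_)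
  have h₃ : x 3 = 0 := by
    simpa [counterexampleObsMat_mulVec] using congr_fun hx (Sum.inl (0, 0))
  have h₂ : x 2 = 0 := by
    simpa [counterexampleObsMat_mulVec, h₄₃] using congr_fun hx (Sum.inl (1, 0))
  have h₁ : x 1 = 0 := by
    simpa [vecHead, vecTail] using congr_fun hx (Sum.inr 0)
  have h₀ : x 0 = 0 := by
    simpa [counterexampleObsMat_mulVec, h₁, h₃₁, h₄₃] using congr_fun hx (Sum.inl (2, 0))
  ext i
  fin_cases i <;> assumption

theorem rank_counterexampleObsMat (h₃₁ : a₃₁ ≠ 0) (h₄₃ : a₄₃ ≠ 0) :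
    (counterexampleObsMat a₃₁ a₃₂ a₄₃).rank = 3 := by
  have hlt : (counterexampleObsMat a₃₁ a₃₂ a₄₃).rank < 4 := by
    refine rank_lt_card_width_of_mulVec_eq_zero (v := ![a₃₂, -a₃₁, 0, 0]) ?_ ?_
    · exact fun h => h₃₁ (by simpa using congr_fun h 1)
    · ext ⟨i, j⟩
      fin_cases i <;> simp [counterexampleObsMat_mulVec]
      ring
  have hle := rank_fromRows_le (counterexampleObsMat a₃₁ a₃₂ a₄₃) !![0, 1, 0, 0]
  rw [rank_fromRows_counterexampleObsMat h₃₁ h₄₃] at hle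
  have hF := rank_le_height (!![0, 1, 0, 0] : Matrix (Fin 1) (Fin 4) ℝ)
  omega

end Counterexample

theorem functional_observability_stronger_than_target_observability :
    -- functional observability plus full row rank of `F` implies `rank(𝒪 Fᵀ) = r`
    (∀ (n q r : ℕ) (A : Matrix (Fin n) (Fin n) ℝ) (C : Matrix (Fin q) (Fin n) ℝ)
        (F : Matrix (Fin r) (Fin n) ℝ),
      (fromRows (obsMat A C) F).rank = (obsMat A C).rank → F.rank = r →
        (obsMat A C * Fᵀ).rank = r) ∧
    -- the converse fails: a 4-dimensional counterexample
    (∀ a31 a32 a43 : ℝ, a31 ≠ 0 → a32 ≠ 0 → a43 ≠ 0 →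
      let A : Matrix (Fin 4) (Fin 4) ℝ :=
        !![0, 0, 0, 0; 0, 0, 0, 0; a31, a32, 0, 0; 0, 0, a43, 0]
      let C : Matrix (Fin 1) (Fin 4) ℝ := !![0, 0, 0, 1]
      let F : Matrix (Fin 1) (Fin 4) ℝ := !![0, 1, 0, 0]
      (obsMat A C * Fᵀ).rank = 1 ∧
        (fromRows (obsMat A C) F).rank = 4 ∧ (obsMat A C).rank = 3) := by
  refine ⟨fun n q r A C F hobs hF => ?_, fun a₃₁ a₃₂ a₄₃ h₃₁ h₃₂ h₄₃ => ?_⟩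
  · rw [rank_mul_transpose_of_span_row_le (span_row_le_of_rank_fromRows_eq hobs), hF]
  · dsimp only
    rw [obsMat_counterexample]
    exact ⟨rank_counterexampleObsMat_mul_transpose h₃₂ h₄₃,
      rank_fromRows_counterexampleObsMat h₃₁ h₄₃, rank_counterexampleObsMat h₃₁ h₄₃⟩
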